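/- Let R = ℂ[x₁,x₂,x₃,y₁,y₂,y₃] carry the diagonal action of the hyperoctahedral group W = B₃ (signed permutations acting simultaneously on the x's and y's). Let J be the ideal generated by the W-alternating polynomials and I = ⋂_{i}⟨x_i, y_i⟩ ∩ ⋂_{i<j}⟨x_i − x_j, y_i − y_j⟩ ∩ ⋂_{i<j}⟨x_i + x_j, y_i + y_j⟩. Then J ⊆ I but J ≠ I. -/

import Mathlib

open MvPolynomial

/-- The signed permutation `(σ, ε) ∈ B₃ = (ℤ/2)³ ⋊ S₃` acting diagonally on
`ℂ[x₁,x₂,x₃,y₁,y₂,y₃]`: it sends `xᵢ ↦ εᵢ x_{σ(i)}` and `yᵢ ↦ εᵢ y_{σ(i)}`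
(`x`'s indexed by `Sum.inl`, `y`'s by `Sum.inr`). -/
noncomputable def hyperoctAct (σ : Equiv.Perm (Fin 3)) (ε : Fin 3 → ℤˣ) :
    MvPolynomial (Fin 3 ⊕ Fin 3) ℂ →ₐ[ℂ] MvPolynomial (Fin 3 ⊕ Fin 3) ℂ :=
  aeval (Sum.elim (fun i => (((ε i : ℤ) : ℂ)) • X (Sum.inl (σ i)))
    (fun i => (((ε i : ℤ) : ℂ)) • X (Sum.inr (σ i))))

/-- `f` is `B₃`-alternating: `w·f = det(w)·f` for every signed permutation `w = (σ,ε)`,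
where `det(w) = sgn(σ)·∏ εᵢ`. -/
def IsB3Alternating (f : MvPolynomial (Fin 3 ⊕ Fin 3) ℂ) : Prop :=
  ∀ (σ : Equiv.Perm (Fin 3)) (ε : Fin 3 → ℤˣ),
    hyperoctAct σ ε f = ((((Equiv.Perm.sign σ : ℤ) * ∏ i, (ε i : ℤ)) : ℤ) : ℂ) • f

/-- The intersection of codimension-two ideals attached to the positive roots
`xᵢ, xᵢ - xⱼ, xᵢ + xⱼ` of `B₃`. -/
noncomputable def B3rootIdeal : Ideal (MvPolynomial (Fin 3 ⊕ Fin 3) ℂ) :=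
  (⨅ i : Fin 3, Ideal.span {X (Sum.inl i), X (Sum.inr i)}) ⊓
  (⨅ (i : Fin 3) (j : Fin 3) (_ : i < j),
    Ideal.span {X (Sum.inl i) - X (Sum.inl j), X (Sum.inr i) - X (Sum.inr j)}) ⊓
  (⨅ (i : Fin 3) (j : Fin 3) (_ : i < j),
    Ideal.span {X (Sum.inl i) + X (Sum.inl j), X (Sum.inr i) + X (Sum.inr j)})

/-!
For each root ideal `I` there is an element `s ∈ W` of determinant `-1` acting trivially on
`R ⧸ I` (a sign change of `(xᵢ, yᵢ)`, a transposition, or a transposition composed with two sign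
changes). An alternating `f` satisfies `s f = -f`, so its image in `R ⧸ I` is its own negative,
hence zero. This gives `J ⊆ I`.

For `J ≠ I`, take `D = ∏_{i<j} (xᵢyⱼ - xⱼyᵢ)`, which lies in every root ideal. An alternating
polynomial has no monomial that divides `x₀²x₁y₁y₂²`: sign changes kill every monomial in which
some pair `(xᵢ, yᵢ)` has even total degree, and of the remaining divisors `x₀x₁y₂` and `x₀y₁y₂`
each is fixed by a transposition. So `J` lies in the monomial ideal spanned by the monomials not
dividing `x₀²x₁y₁y₂²`. That ideal contains `x₂` and `y₀`, and modulo `(x₂, y₀)` the polynomial `D`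
reduces to `x₀²x₁y₁y₂²` itself, so `D ∉ J`.
-/
namespace MvPolynomial

variable {σ R 𝕜 : Type*}

theorem mem_of_algHom_apply_eq_neg [Field 𝕜] [NeZero (2 : 𝕜)] {I : Ideal (MvPolynomial σ 𝕜)}
    (s : MvPolynomial σ 𝕜 →ₐ[𝕜] MvPolynomial σ 𝕜) (hs : ∀ k, s (X k) - X k ∈ I)
    {f : MvPolynomial σ 𝕜} (hf : s f = -f) : f ∈ I := by
  have hmk : (Ideal.Quotient.mkₐ 𝕜 I).comp s = Ideal.Quotient.mkₐ 𝕜 I :=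
    algHom_ext fun k => Ideal.Quotient.eq.mpr (hs k)
  have h2 : (2 : 𝕜) • Ideal.Quotient.mk I f = 0 := by
    have := AlgHom.congr_fun hmk f
    simp only [AlgHom.comp_apply, hf, map_neg, Ideal.Quotient.mkₐ_eq_mk] at this
    rw [two_smul]
    linear_combination -this
  rw [← Ideal.Quotient.eq_zero_iff_mem]
  exact (smul_eq_zero.mp h2).resolve_left two_ne_zero

section CommSemiring

variable [CommSemiring R]

theorem aeval_C_mul_X_monomial (c : σ → R) (m : σ →₀ ℕ) (a : R) :
    aeval (fun k => C (c k) * X k) (monomial m a) =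
      monomial m (a * m.prod fun k n => c k ^ n) := by
  simp_rw [aeval_monomial, mul_pow, ← map_pow, Finsupp.prod_mul, ← map_finsuppProd,
    monomial_eq, map_mul, algebraMap_eq]
  ring

theorem coeff_aeval_C_mul_X (c : σ → R) (f : MvPolynomial σ R) (m : σ →₀ ℕ) :
    coeff m (aeval (fun k => C (c k) * X k) f) = coeff m f * m.prod fun k n => c k ^ n := by
  classical
  induction f using MvPolynomial.induction_on' with
  | monomial m' a =>
    rw [aeval_C_mul_X_monomial, coeff_monomial, coeff_monomial]
    split_ifs with h
    · rw [h]
    · rw [zero_mul]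
  | add p q hp hq => rw [map_add, coeff_add, coeff_add, hp, hq, add_mul]

theorem mem_span_X_pow_succ_iff (n : σ →₀ ℕ) {p : MvPolynomial σ R} :
    p ∈ Ideal.span (Set.range fun k => X k ^ (n k + 1)) ↔ ∀ m ∈ p.support, ¬m ≤ n := by
  have hgen : (Set.range fun k => (X k ^ (n k + 1) : MvPolynomial σ R)) =
      (fun s => monomial s 1) '' Set.range fun k => Finsupp.single k (n k + 1) := by
    rw [← Set.range_comp]
    simp only [Function.comp_def, X_pow_eq_monomial]
  simp only [hgen, mem_ideal_span_monomial_image, Set.exists_range_iff, Finsupp.single_le_iff,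
    Nat.add_one_le_iff]
  simp only [Finsupp.le_def, not_forall, not_le]

end CommSemiring

section CharZero

variable [CommRing R] [NoZeroDivisors R] [CharZero R]

theorem coeff_eq_zero_of_aeval_C_mul_X_eq_neg {c : σ → R} {f : MvPolynomial σ R}
    (hf : aeval (fun k => C (c k) * X k) f = -f) {m : σ →₀ ℕ}
    (hm : (m.prod fun k n => c k ^ n) = 1) : coeff m f = 0 := by
  have h := coeff_aeval_C_mul_X c f m
  rw [hf, hm, coeff_neg, mul_one] at h
  exact CharZero.eq_neg_self_iff.mp h.symm

theorem coeff_eq_zero_of_rename_eq_neg {e : σ → σ} (he : Function.Injective e)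
    {f : MvPolynomial σ R} (hf : rename e f = -f) {m : σ →₀ ℕ} (hm : m.mapDomain e = m) :
    coeff m f = 0 := by
  have h := coeff_rename_mapDomain e he f m
  rw [hf, hm, coeff_neg] at h
  exact CharZero.neg_eq_self_iff.mp h

end CharZero

end MvPolynomial

open MvPolynomial

theorem prod_mulSingle_neg_one {ι : Type*} [Fintype ι] [DecidableEq ι] (i : ι) :
    ∏ a, (((Pi.mulSingle i (-1) : ι → ℤˣ) a : ℤˣ) : ℤ) = -1 := by
  rw [← Units.coe_prod, Finset.prod_pi_mulSingle']
  simp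

@[simp]
theorem hyperoctAct_X_inl (σ : Equiv.Perm (Fin 3)) (ε : Fin 3 → ℤˣ) (a : Fin 3) :
    hyperoctAct σ ε (X (Sum.inl a)) = ((ε a : ℤ) : ℂ) • X (Sum.inl (σ a)) := by
  simp [hyperoctAct]

@[simp]
theorem hyperoctAct_X_inr (σ : Equiv.Perm (Fin 3)) (ε : Fin 3 → ℤˣ) (a : Fin 3) :
    hyperoctAct σ ε (X (Sum.inr a)) = ((ε a : ℤ) : ℂ) • X (Sum.inr (σ a)) := by
  simp [hyperoctAct]

theorem hyperoctAct_one_eq_aeval (ε : Fin 3 → ℤˣ) :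
    hyperoctAct 1 ε =
      aeval fun k =>
        C (Sum.elim (fun a => ((ε a : ℤ) : ℂ)) (fun a => ((ε a : ℤ) : ℂ)) k) * X k := by
  refine algHom_ext ?_
  rintro (a | a) <;> simp [smul_eq_C_mul]

theorem hyperoctAct_eq_rename (σ : Equiv.Perm (Fin 3)) :
    hyperoctAct σ 1 = rename (Equiv.sumCongr σ σ) := by
  refine algHom_ext ?_
  rintro (a | a) <;> simp

theorem mem_B3rootIdeal_iff {f : MvPolynomial (Fin 3 ⊕ Fin 3) ℂ} :
    f ∈ B3rootIdeal ↔ (∀ i, f ∈ Ideal.span {X (Sum.inl i), X (Sum.inr i)}) ∧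
      (∀ i j, i < j →
        f ∈ Ideal.span {X (Sum.inl i) - X (Sum.inl j), X (Sum.inr i) - X (Sum.inr j)}) ∧
      (∀ i j, i < j →
        f ∈ Ideal.span {X (Sum.inl i) + X (Sum.inl j), X (Sum.inr i) + X (Sum.inr j)}) := by
  simp only [B3rootIdeal, Ideal.mem_inf, Submodule.mem_iInf, and_assoc]

namespace IsB3Alternating

variable {f : MvPolynomial (Fin 3 ⊕ Fin 3) ℂ}

theorem apply_eq_neg (hf : IsB3Alternating f) {σ : Equiv.Perm (Fin 3)} {ε : Fin 3 → ℤˣ}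
    (hdet : (Equiv.Perm.sign σ : ℤ) * ∏ i, (ε i : ℤ) = -1) : hyperoctAct σ ε f = -f := by
  rw [hf σ ε, hdet]
  simp

theorem mem_span_X (hf : IsB3Alternating f) (i : Fin 3) :
    f ∈ Ideal.span {X (Sum.inl i), X (Sum.inr i)} := by
  refine mem_of_algHom_apply_eq_neg (hyperoctAct 1 (Pi.mulSingle i (-1))) ?_
    (hf.apply_eq_neg (by simp [prod_mulSingle_neg_one]))
  rintro (a | a) <;> rcases eq_or_ne a i with rfl | hai <;> simp [*]
  exacts [Ideal.mem_span_pair.mpr ⟨-2, 0, by ring⟩, Ideal.mem_span_pair.mpr ⟨0, -2, by ring⟩]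

theorem mem_span_X_sub_X (hf : IsB3Alternating f) {i j : Fin 3} (hij : i ≠ j) :
    f ∈ Ideal.span {X (Sum.inl i) - X (Sum.inl j), X (Sum.inr i) - X (Sum.inr j)} := by
  refine mem_of_algHom_apply_eq_neg (hyperoctAct (Equiv.swap i j) 1) ?_
    (hf.apply_eq_neg (by simp [Equiv.Perm.sign_swap hij]))
  rintro (a | a) <;> rcases eq_or_ne a i with rfl | hai <;> rcases eq_or_ne a j with rfl | haj <;>
    simp [Equiv.swap_apply_of_ne_of_ne, *]
  exacts [Ideal.mem_span_pair.mpr ⟨-1, 0, by ring⟩, Ideal.mem_span_pair.mpr ⟨1, 0, by ring⟩,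
    Ideal.mem_span_pair.mpr ⟨0, -1, by ring⟩, Ideal.mem_span_pair.mpr ⟨0, 1, by ring⟩]

theorem mem_span_X_add_X (hf : IsB3Alternating f) {i j : Fin 3} (hij : i ≠ j) :
    f ∈ Ideal.span {X (Sum.inl i) + X (Sum.inl j), X (Sum.inr i) + X (Sum.inr j)} := by
  refine mem_of_algHom_apply_eq_neg
    (hyperoctAct (Equiv.swap i j) (Pi.mulSingle i (-1) * Pi.mulSingle j (-1))) ?_
    (hf.apply_eq_neg ?_)
  · rintro (a | a) <;> rcases eq_or_ne a i with rfl | hai <;>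
      rcases eq_or_ne a j with rfl | haj <;> simp [Equiv.swap_apply_of_ne_of_ne, *]
    exacts [Ideal.mem_span_pair.mpr ⟨-1, 0, by ring⟩, Ideal.mem_span_pair.mpr ⟨-1, 0, by ring⟩,
      Ideal.mem_span_pair.mpr ⟨0, -1, by ring⟩, Ideal.mem_span_pair.mpr ⟨0, -1, by ring⟩]
  · simp [Equiv.Perm.sign_swap hij, Finset.prod_mul_distrib, prod_mulSingle_neg_one]

theorem mem_B3rootIdeal (hf : IsB3Alternating f) : f ∈ B3rootIdeal :=
  mem_B3rootIdeal_iff.mpr ⟨hf.mem_span_X, fun _ _ hij => hf.mem_span_X_sub_X hij.ne,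
    fun _ _ hij => hf.mem_span_X_add_X hij.ne⟩

theorem coeff_eq_zero_of_even (hf : IsB3Alternating f) (i : Fin 3) {m : Fin 3 ⊕ Fin 3 →₀ ℕ}
    (hm : Even (m (Sum.inl i) + m (Sum.inr i))) : coeff m f = 0 := by
  have hflip := hf.apply_eq_neg (σ := 1) (ε := Pi.mulSingle i (-1))
    (by simp [prod_mulSingle_neg_one])
  rw [hyperoctAct_one_eq_aeval] at hflip
  refine coeff_eq_zero_of_aeval_C_mul_X_eq_neg hflip ?_
  rw [Finsupp.prod_fintype _ _ fun _ => pow_zero _, Fintype.prod_sum_type]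
  simp only [Sum.elim_inl, Sum.elim_inr, ← Finset.prod_mul_distrib, ← pow_add]
  rw [Finset.prod_eq_single i (fun a _ hai => by simp [hai]) (by simp)]
  simpa using hm.neg_one_pow

theorem coeff_eq_zero_of_swap (hf : IsB3Alternating f) {i j : Fin 3} (hij : i ≠ j)
    {m : Fin 3 ⊕ Fin 3 →₀ ℕ} (hx : m (Sum.inl i) = m (Sum.inl j))
    (hy : m (Sum.inr i) = m (Sum.inr j)) : coeff m f = 0 := by
  have hswap := hf.apply_eq_neg (σ := Equiv.swap i j) (ε := 1)
    (by simp [Equiv.Perm.sign_swap hij])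
  rw [hyperoctAct_eq_rename] at hswap
  refine coeff_eq_zero_of_rename_eq_neg (Equiv.injective _) hswap ?_
  ext (a | a) <;> rw [Finsupp.mapDomain_equiv_apply] <;>
    rcases eq_or_ne a i with rfl | hai <;> rcases eq_or_ne a j with rfl | haj <;>
    simp [Equiv.swap_apply_of_ne_of_ne, *]

end IsB3Alternating

/-- The exponent of `x₀²x₁y₁y₂²`. -/
noncomputable def witnessExponent : Fin 3 ⊕ Fin 3 →₀ ℕ :=
  Finsupp.equivFunOnFinite.symm (Sum.elim ![2, 1, 0] ![0, 1, 2])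

theorem IsB3Alternating.coeff_eq_zero_of_le_witnessExponent
    {f : MvPolynomial (Fin 3 ⊕ Fin 3) ℂ} (hf : IsB3Alternating f) {m : Fin 3 ⊕ Fin 3 →₀ ℕ}
    (hm : m ≤ witnessExponent) : coeff m f = 0 := by
  by_contra hne
  have hodd : ∀ i, (m (Sum.inl i) + m (Sum.inr i)) % 2 = 1 := fun i =>
    Nat.odd_iff.mp <| Nat.not_even_iff_odd.mp fun h => hne (hf.coeff_eq_zero_of_even i h)
  obtain ⟨h0, h1, h2⟩ := And.intro (hodd 0) (And.intro (hodd 1) (hodd 2))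
  have hx : m (Sum.inl 0) ≤ 2 ∧ m (Sum.inl 1) ≤ 1 ∧ m (Sum.inl 2) ≤ 0 := ⟨hm _, hm _, hm _⟩
  have hy : m (Sum.inr 0) ≤ 0 ∧ m (Sum.inr 1) ≤ 1 ∧ m (Sum.inr 2) ≤ 2 := ⟨hm _, hm _, hm _⟩
  rcases (by omega : m (Sum.inl 0) = m (Sum.inl 1) ∧ m (Sum.inr 0) = m (Sum.inr 1) ∨
      m (Sum.inl 1) = m (Sum.inl 2) ∧ m (Sum.inr 1) = m (Sum.inr 2)) with ⟨hx, hy⟩ | ⟨hx, hy⟩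
  exacts [hne (hf.coeff_eq_zero_of_swap (by decide) hx hy),
    hne (hf.coeff_eq_zero_of_swap (by decide) hx hy)]

theorem IsB3Alternating.mem_span_X_pow_succ_witnessExponent
    {f : MvPolynomial (Fin 3 ⊕ Fin 3) ℂ} (hf : IsB3Alternating f) :
    f ∈ Ideal.span (Set.range fun k => X k ^ (witnessExponent k + 1)) :=
  (mem_span_X_pow_succ_iff _).mpr fun _ hm hle =>
    mem_support_iff.mp hm (hf.coeff_eq_zero_of_le_witnessExponent hle)

noncomputable def minor (i j : Fin 3) : MvPolynomial (Fin 3 ⊕ Fin 3) ℂ :=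
  X (Sum.inl i) * X (Sum.inr j) - X (Sum.inl j) * X (Sum.inr i)

noncomputable def minorProduct : MvPolynomial (Fin 3 ⊕ Fin 3) ℂ :=
  minor 0 1 * minor 0 2 * minor 1 2

theorem minor_mem_span_X_left (i j : Fin 3) :
    minor i j ∈ Ideal.span {X (Sum.inl i), X (Sum.inr i)} :=
  Ideal.mem_span_pair.mpr ⟨X (Sum.inr j), -X (Sum.inl j), by rw [minor]; ring⟩

theorem minor_mem_span_X_right (i j : Fin 3) :
    minor i j ∈ Ideal.span {X (Sum.inl j), X (Sum.inr j)} :=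
  Ideal.mem_span_pair.mpr ⟨-X (Sum.inr i), X (Sum.inl i), by rw [minor]; ring⟩

theorem minor_mem_span_X_sub_X (i j : Fin 3) :
    minor i j ∈ Ideal.span {X (Sum.inl i) - X (Sum.inl j), X (Sum.inr i) - X (Sum.inr j)} :=
  Ideal.mem_span_pair.mpr ⟨X (Sum.inr j), -X (Sum.inl j), by rw [minor]; ring⟩

theorem minor_mem_span_X_add_X (i j : Fin 3) :
    minor i j ∈ Ideal.span {X (Sum.inl i) + X (Sum.inl j), X (Sum.inr i) + X (Sum.inr j)} :=
  Ideal.mem_span_pair.mpr ⟨X (Sum.inr j), -X (Sum.inl j), by rw [minor]; ring⟩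

theorem minor_dvd_minorProduct {i j : Fin 3} (hij : i < j) : minor i j ∣ minorProduct := by
  obtain ⟨rfl, rfl⟩ | ⟨rfl, rfl⟩ | ⟨rfl, rfl⟩ : i = 0 ∧ j = 1 ∨ i = 0 ∧ j = 2 ∨ i = 1 ∧ j = 2 := by
    omega
  exacts [dvd_mul_of_dvd_left (dvd_mul_right _ _) _, dvd_mul_of_dvd_left (dvd_mul_left _ _) _,
    dvd_mul_left _ _]

theorem minorProduct_mem_B3rootIdeal : minorProduct ∈ B3rootIdeal := by
  refine mem_B3rootIdeal_iff.mpr ⟨fun i => ?_,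
    fun i j hij => Ideal.mem_of_dvd _ (minor_dvd_minorProduct hij) (minor_mem_span_X_sub_X i j),
    fun i j hij => Ideal.mem_of_dvd _ (minor_dvd_minorProduct hij) (minor_mem_span_X_add_X i j)⟩
  fin_cases i
  · exact Ideal.mem_of_dvd _ (minor_dvd_minorProduct (by decide)) (minor_mem_span_X_left 0 1)
  · exact Ideal.mem_of_dvd _ (minor_dvd_minorProduct (by decide)) (minor_mem_span_X_right 0 1)
  · exact Ideal.mem_of_dvd _ (minor_dvd_minorProduct (by decide)) (minor_mem_span_X_right 1 2)

theorem minorProduct_notMem_span_X_pow_succ_witnessExponent :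
    minorProduct ∉ Ideal.span (Set.range fun k => X k ^ (witnessExponent k + 1)) := by
  set K := Ideal.span (Set.range fun k => (X k ^ (witnessExponent k + 1) : MvPolynomial _ ℂ))
  have hK : ∀ k, Ideal.Quotient.mk K (X k ^ (witnessExponent k + 1)) = 0 := fun k =>
    Ideal.Quotient.eq_zero_iff_mem.mpr (Ideal.subset_span ⟨k, rfl⟩)
  have hx2 : Ideal.Quotient.mk K (X (Sum.inl 2)) = 0 := by
    simpa [witnessExponent] using hK (Sum.inl 2)
  have hy0 : Ideal.Quotient.mk K (X (Sum.inr 0)) = 0 := by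
    simpa [witnessExponent] using hK (Sum.inr 0)
  have hmonomial : monomial witnessExponent (1 : ℂ) =
      X (Sum.inl 0) ^ 2 * X (Sum.inl 1) * X (Sum.inr 1) * X (Sum.inr 2) ^ 2 := by
    simp only [witnessExponent, monomial_eq, C_1, one_mul, Finsupp.prod_fintype, pow_zero,
      implies_true, Finsupp.equivFunOnFinite_symm_apply_apply, Fintype.prod_sum_type,
      Sum.elim_inl, Sum.elim_inr, Fin.prod_univ_three, Matrix.cons_val_zero, Matrix.cons_val_one,
      Matrix.cons_val, pow_one, mul_one]
    ring
  have hmk :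
      Ideal.Quotient.mk K minorProduct = Ideal.Quotient.mk K (monomial witnessExponent 1) := by
    simp only [minorProduct, minor, hmonomial, map_mul, map_sub, map_pow, hx2, hy0]
    ring
  intro hmem
  have hmono : monomial witnessExponent (1 : ℂ) ∈ K := by
    rw [← Ideal.Quotient.eq_zero_iff_mem, ← hmk, Ideal.Quotient.eq_zero_iff_mem]
    exact hmem
  exact (mem_span_X_pow_succ_iff _).mp hmono witnessExponent (by simp) le_rfl

/-- In type `B₃`, the ideal `J` generated by the `W`-alternating polynomials is strictly
contained in the intersection `I` of the codimension-two root ideals: `J ⊆ I` but `J ≠ I`. -/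
theorem stmt10 :
    Ideal.span {f : MvPolynomial (Fin 3 ⊕ Fin 3) ℂ | IsB3Alternating f} ≤ B3rootIdeal ∧
    Ideal.span {f : MvPolynomial (Fin 3 ⊕ Fin 3) ℂ | IsB3Alternating f} ≠ B3rootIdeal := by
  have hJ : Ideal.span {f : MvPolynomial (Fin 3 ⊕ Fin 3) ℂ | IsB3Alternating f} ≤
      Ideal.span (Set.range fun k => X k ^ (witnessExponent k + 1)) :=
    Ideal.span_le.mpr fun _ hf => IsB3Alternating.mem_span_X_pow_succ_witnessExponent hf
  refine ⟨Ideal.span_le.mpr fun _ hf => IsB3Alternating.mem_B3rootIdeal hf, fun h => ?_⟩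
  exact minorProduct_notMem_span_X_pow_succ_witnessExponent (hJ (h ▸ minorProduct_mem_B3rootIdeal))
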